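/- There is a universal constant C such that the following holds for all n and all α > 1 with ℓ = 2 dividing n. There exists a deterministic online algorithm for the online re-embedding model with two servers such that, on every instance, letting Δ = min{|V_init(S_0) ∩ V_0|, |V_init(S_0) ∩ V_1|}: (a) the algorithm's total cost (moving plus communication) is at most C·α·Δ·(1 + log₂ n), hence at most C·(1 + log₂ n) times the optimal offline cost 2αΔ; (b) at every point during its execution the load of each server is at most n/2 + 4Δ; and (c) its final assignment places each ground-truth component alone on one server. -/

import Mathlib

open Finset

/-- Two vertices lie in the same connected component revealed by the edge list `E`:
the reflexive-symmetric-transitive closure of the revealed edge relation. -/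
def sameComp {n : ℕ} (E : List (Fin n × Fin n)) (u v : Fin n) : Prop :=
  Relation.EqvGen (fun a b => (a, b) ∈ E ∨ (b, a) ∈ E) u v

/-- An instance of the online re-embedding problem with `n` vertices and `ℓ` servers:
a ground-truth partition into components of size `n/ℓ`, a perfectly balanced initial
assignment, and an online edge sequence each of whose edges joins two vertices of the
same ground-truth component and whose revealed connected components are exactly the
ground-truth components. -/
structure ReInstance (n ℓ : ℕ) where
  truth : Fin n → Fin ℓ
  init : Fin n → Fin ℓ
  sigma : List (Fin n × Fin n)
  truth_size : ∀ j, (Finset.univ.filter fun v => truth v = j).card = n / ℓ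
  init_size : ∀ j, (Finset.univ.filter fun v => init v = j).card = n / ℓ
  edges_within : ∀ e ∈ sigma, truth e.1 = truth e.2
  reveals : ∀ u v, sameComp sigma u v ↔ truth u = truth v

/-- A deterministic online algorithm: given the initial assignment and the prefix of the
edge sequence revealed so far, it produces the current assignment of vertices to servers. -/
abbrev OnlineAlg (n ℓ : ℕ) := (Fin n → Fin ℓ) → List (Fin n × Fin n) → Fin n → Fin ℓ

/-- The assignment maintained by online algorithm `A` after `t` requests of `σ` have been
processed (the assignment is `a0` before any request). -/
def state {n ℓ : ℕ} (A : OnlineAlg n ℓ) (a0 : Fin n → Fin ℓ)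
    (σ : List (Fin n × Fin n)) : ℕ → Fin n → Fin ℓ
  | 0 => a0
  | t + 1 => A a0 (σ.take (t + 1))

/-- The number of vertices reassigned when changing assignment `f` into assignment `g`. -/
def movesBetween {n ℓ : ℕ} (f g : Fin n → Fin ℓ) : ℕ :=
  (Finset.univ.filter fun v => f v ≠ g v).card

/-- Total number of vertex moves performed by online algorithm `A` on the instance. -/
def algMoves {n ℓ : ℕ} (A : OnlineAlg n ℓ) (a0 : Fin n → Fin ℓ)
    (σ : List (Fin n × Fin n)) : ℕ :=
  ∑ t ∈ Finset.range σ.length,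
    movesBetween (state A a0 σ t) (state A a0 σ (t + 1))

/-- Total communication cost of online algorithm `A`: one unit for every request whose
endpoints are on different servers at the time of the request. -/
def algComm {n ℓ : ℕ} (A : OnlineAlg n ℓ) (a0 : Fin n → Fin ℓ)
    (σ : List (Fin n × Fin n)) : ℕ :=
  ∑ t : Fin σ.length,
    if state A a0 σ t.val (σ.get t).1 ≠ state A a0 σ t.val (σ.get t).2 then 1 else 0

/-- Total cost of online algorithm `A`: `α` per vertex move plus the communication cost. -/
def algCost {n ℓ : ℕ} (α : ℝ) (A : OnlineAlg n ℓ) (a0 : Fin n → Fin ℓ)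
    (σ : List (Fin n × Fin n)) : ℝ :=
  α * algMoves A a0 σ + algComm A a0 σ

/-- An assignment is valid for augmentation `ε`: each server load is at most `(1+ε)·n/ℓ`. -/
def validCap {n ℓ : ℕ} (ε : ℝ) (f : Fin n → Fin ℓ) : Prop :=
  ∀ j, ((Finset.univ.filter fun v => f v = j).card : ℝ) ≤ (1 + ε) * n / ℓ

/-- An assignment is a perfect partitioning: its classes are exactly the
ground-truth components, i.e. each ground-truth component is alone on one server. -/
def isPerfect {n ℓ : ℕ} (truth f : Fin n → Fin ℓ) : Prop :=
  ∀ u v, f u = f v ↔ truth u = truth v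

/-- `f` assigns all vertices of each connected component revealed by `E` to one server. -/
def collocates {n ℓ : ℕ} (E : List (Fin n × Fin n)) (f : Fin n → Fin ℓ) : Prop :=
  ∀ u v, sameComp E u v → f u = f v

/-- Number of vertex moves of an offline schedule `g` (which may also move vertices
before the first request). -/
def schedMoves {n ℓ : ℕ} (a0 : Fin n → Fin ℓ) (σ : List (Fin n × Fin n))
    (g : ℕ → Fin n → Fin ℓ) : ℕ :=
  movesBetween a0 (g 0) +
    ∑ t ∈ Finset.range σ.length, movesBetween (g t) (g (t + 1))

/-- Communication cost of an offline schedule `g`. -/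
def schedComm {n ℓ : ℕ} (σ : List (Fin n × Fin n)) (g : ℕ → Fin n → Fin ℓ) : ℕ :=
  ∑ t : Fin σ.length, if g t.val (σ.get t).1 ≠ g t.val (σ.get t).2 then 1 else 0

/-- The optimal offline cost: the infimum cost over all offline schedules which respect
the capacity `(1+ε)·n/ℓ` at all times and end with a perfect partitioning. -/
noncomputable def OPTcost {n ℓ : ℕ} (α ε : ℝ) (I : ReInstance n ℓ) : ℝ :=
  sInf { c : ℝ | ∃ g : ℕ → Fin n → Fin ℓ,
    (∀ t, validCap ε (g t)) ∧ isPerfect I.truth (g I.sigma.length) ∧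
    c = α * schedMoves I.init I.sigma g + schedComm I.sigma g }

/-- The minimum number of vertex moves of any offline schedule which respects the
capacity `(1+ε)·n/ℓ` at all times and ends with a perfect partitioning. -/
noncomputable def OPTmoves {n ℓ : ℕ} (ε : ℝ) (I : ReInstance n ℓ) : ℕ :=
  sInf { m : ℕ | ∃ g : ℕ → Fin n → Fin ℓ,
    (∀ t, validCap ε (g t)) ∧ isPerfect I.truth (g I.sigma.length) ∧
    m = schedMoves I.init I.sigma g }

/-!
The algorithm keeps every class of the components revealed so far on a single server. When a
request joins two classes on different servers, one of them moves onto the other's server, with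
hysteresis: a class is forced to move if keeping it would leave at least two thirds of the union
away from its initial server, and otherwise the class with the smaller score moves. So at most two
thirds of every class is displaced, that is at most twice its initial minority; as the minorities
of the classes add up to at most `2Δ`, no server ever holds more than `n/2 + 4Δ` vertices.

The moves are paid for by the potential `∑_C (30 m(C) log₂ (2|C|) + 3 (2 m(C) - d(C)))`, where
`m(C)` is the initial minority of the class `C` and `d(C)` the number of its displaced vertices:
merging two classes on one server never decreases it, merging by moving a class `P` increases it
by at least `|P|`, and it never exceeds `72 Δ (1 + log₂ n)`. Once both components are complete, the algorithm switches, with at most `6Δ`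
moves, to the perfect partitioning putting each component on the server of its initial majority.
The endpoints of each request are collocated right after it is served, so every request that is
paid for is followed by a move, and the communication cost is at most the number of moves.
-/

section SameComp

variable {n : ℕ} {E E' : List (Fin n × Fin n)} {e : Fin n × Fin n} {u v w : Fin n}

lemma sameComp_refl (E : List (Fin n × Fin n)) (v : Fin n) : sameComp E v v :=
  Relation.EqvGen.refl v

lemma sameComp.symm (h : sameComp E u v) : sameComp E v u := Relation.EqvGen.symm u v h

lemma sameComp.trans (h : sameComp E u v) (h' : sameComp E v w) : sameComp E u w :=
  Relation.EqvGen.trans u v w h h'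

lemma sameComp.mono (hE : E ⊆ E') (h : sameComp E u v) : sameComp E' u v :=
  Relation.EqvGen.mono (fun _ _ hab => Or.imp (@hE _) (@hE _) hab) _ _ h

lemma sameComp_of_mem (he : e ∈ E) : sameComp E e.1 e.2 := Relation.EqvGen.rel _ _ (Or.inl he)

lemma sameComp_nil_iff : sameComp ([] : List (Fin n × Fin n)) u v ↔ u = v := by
  refine ⟨fun h => ?_, fun h => h ▸ sameComp_refl _ _⟩
  induction h with
  | rel a b hab => simp at hab
  | refl => rfl
  | symm _ _ _ ih => exact ih.symm
  | trans _ _ _ _ _ ih ih' => exact ih.trans ih'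

lemma sameComp_append_singleton_iff :
    sameComp (E ++ [e]) u v ↔ sameComp E u v ∨ (sameComp E u e.1 ∧ sameComp E e.2 v)
      ∨ (sameComp E u e.2 ∧ sameComp E e.1 v) := by
  constructor
  · intro h
    induction h with
    | rel a b hab =>
      simp only [List.mem_append, List.mem_singleton] at hab
      rcases hab with (hab | rfl) | (hab | rfl)
      · exact Or.inl (Relation.EqvGen.rel _ _ (Or.inl hab))
      · exact Or.inr (Or.inl ⟨sameComp_refl _ _, sameComp_refl _ _⟩)
      · exact Or.inl (Relation.EqvGen.rel _ _ (Or.inr hab))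
      · exact Or.inr (Or.inr ⟨sameComp_refl _ _, sameComp_refl _ _⟩)
    | refl a => exact Or.inl (sameComp_refl _ _)
    | symm a b _ ih =>
      rcases ih with h | ⟨h1, h2⟩ | ⟨h1, h2⟩
      · exact Or.inl h.symm
      · exact Or.inr (Or.inr ⟨h2.symm, h1.symm⟩)
      · exact Or.inr (Or.inl ⟨h2.symm, h1.symm⟩)
    | trans a b c _ _ ih ih' =>
      rcases ih with h | ⟨h1, h2⟩ | ⟨h1, h2⟩ <;> rcases ih' with g | ⟨g1, g2⟩ | ⟨g1, g2⟩
      · exact Or.inl (h.trans g)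
      · exact Or.inr (Or.inl ⟨h.trans g1, g2⟩)
      · exact Or.inr (Or.inr ⟨h.trans g1, g2⟩)
      · exact Or.inr (Or.inl ⟨h1, h2.trans g⟩)
      · exact Or.inr (Or.inl ⟨h1, g2⟩)
      · exact Or.inl (h1.trans g2)
      · exact Or.inr (Or.inr ⟨h1, h2.trans g⟩)
      · exact Or.inl (h1.trans g2)
      · exact Or.inr (Or.inr ⟨h1, g2⟩)
  · have hsub : E ⊆ E ++ [e] := List.subset_append_left _ _
    have he : sameComp (E ++ [e]) e.1 e.2 := sameComp_of_mem (by simp)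
    rintro (h | ⟨h1, h2⟩ | ⟨h1, h2⟩)
    · exact h.mono hsub
    · exact (h1.mono hsub).trans (he.trans (h2.mono hsub))
    · exact (h1.mono hsub).trans (he.symm.trans (h2.mono hsub))

lemma sameComp_append_swap : sameComp (E ++ [e.swap]) = sameComp (E ++ [e]) := by
  ext u v
  simp only [sameComp_append_singleton_iff, Prod.fst_swap, Prod.snd_swap]
  tauto

lemma sameComp_append_iff_of_sameComp (he : sameComp E e.1 e.2) :
    sameComp (E ++ [e]) u v ↔ sameComp E u v := by
  rw [sameComp_append_singleton_iff]
  constructor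
  · rintro (h | ⟨h1, h2⟩ | ⟨h1, h2⟩)
    · exact h
    · exact h1.trans (he.trans h2)
    · exact h1.trans (he.symm.trans h2)
  · exact Or.inl

end SameComp

section OnlineCost

variable {n ℓ : ℕ}

lemma movesBetween_self (f : Fin n → Fin ℓ) : movesBetween f f = 0 := by simp [movesBetween]

lemma one_le_movesBetween {f g : Fin n → Fin ℓ} {x y : Fin n} (hf : f x ≠ f y) (hg : g x = g y) :
    1 ≤ movesBetween f g := by
  refine Finset.card_pos.2 ?_
  by_cases hx : f x = g x
  · refine ⟨y, Finset.mem_filter.2 ⟨Finset.mem_univ y, ?_⟩⟩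
    rw [← hg, ← hx]
    exact hf.symm
  · exact ⟨x, by simpa using hx⟩

lemma algComm_le_algMoves {A : OnlineAlg n ℓ} {a0 : Fin n → Fin ℓ} {σ : List (Fin n × Fin n)}
    (h : ∀ t (ht : t < σ.length), state A a0 σ (t + 1) σ[t].1 = state A a0 σ (t + 1) σ[t].2) :
    algComm A a0 σ ≤ algMoves A a0 σ := by
  rw [algComm, algMoves, ← Fin.sum_univ_eq_sum_range
    (fun t => movesBetween (state A a0 σ t) (state A a0 σ (t + 1)))]
  refine Finset.sum_le_sum fun t _ => ?_
  split_ifs with hne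
  · exact one_le_movesBetween hne (h t t.isLt)
  · exact Nat.zero_le _

lemma isPerfect_of_injective {truth f : Fin n → Fin ℓ} (htr : Function.Injective truth)
    (hcard : ∀ j, (univ.filter (f · = j)).card = (univ.filter (truth · = j)).card) :
    isPerfect truth f := by
  intro u v
  rw [htr.eq_iff]
  refine ⟨fun h => ?_, fun h => h ▸ rfl⟩
  by_contra huv
  have h2 : 1 < (univ.filter (f · = f u)).card :=
    Finset.one_lt_card.2 ⟨u, by simp, v, by simp [h], huv⟩
  have h1 : (univ.filter (truth · = f u)).card ≤ 1 := Finset.card_le_one.2 fun a ha b hb =>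
    htr ((Finset.mem_filter.1 ha).2.trans (Finset.mem_filter.1 hb).2.symm)
  rw [hcard] at h2
  omega

end OnlineCost

namespace MajorityVoting

open scoped Classical

variable {n : ℕ}

section Classes

variable {E : List (Fin n × Fin n)} {e : Fin n × Fin n} {u v w : Fin n}

noncomputable def cls (E : List (Fin n × Fin n)) (v : Fin n) : Finset (Fin n) :=
  univ.filter (sameComp E · v)

@[simp] lemma mem_cls : w ∈ cls E v ↔ sameComp E w v := by simp [cls]

lemma self_mem_cls : v ∈ cls E v := mem_cls.2 (sameComp_refl E v)

lemma cls_nonempty (E : List (Fin n × Fin n)) (v : Fin n) : (cls E v).Nonempty :=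
  ⟨v, self_mem_cls⟩

lemma cls_eq_of_sameComp (h : sameComp E u v) : cls E u = cls E v := by
  ext w
  simp only [mem_cls]
  exact ⟨fun g => g.trans h, fun g => g.trans h.symm⟩

lemma cls_eq_of_mem (h : u ∈ cls E v) : cls E u = cls E v := cls_eq_of_sameComp (mem_cls.1 h)

lemma disjoint_cls (h : ¬ sameComp E u v) : Disjoint (cls E u) (cls E v) :=
  Finset.disjoint_left.2 fun _ hu hv => h ((mem_cls.1 hu).symm.trans (mem_cls.1 hv))

lemma cls_nil (v : Fin n) : cls ([] : List (Fin n × Fin n)) v = {v} := by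
  ext w
  simp [sameComp_nil_iff]

lemma cls_append_of_sameComp (he : sameComp E e.1 e.2) : cls (E ++ [e]) = cls E := by
  ext v w
  simp only [mem_cls, sameComp_append_iff_of_sameComp he]

lemma cls_append_fst : cls (E ++ [e]) e.1 = cls E e.1 ∪ cls E e.2 := by
  ext w
  simp only [mem_cls, Finset.mem_union, sameComp_append_singleton_iff]
  constructor
  · rintro (h | ⟨h, _⟩ | ⟨h, _⟩)
    · exact Or.inl h
    · exact Or.inl h
    · exact Or.inr h
  · rintro (h | h)
    · exact Or.inl h
    · exact Or.inr (Or.inr ⟨h, sameComp_refl _ _⟩)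

lemma cls_append_of_notMem (hv : v ∉ cls (E ++ [e]) e.1) : cls (E ++ [e]) v = cls E v := by
  have hsub : E ⊆ E ++ [e] := List.subset_append_left _ _
  have h1 : ¬ sameComp E v e.1 := fun h => hv (mem_cls.2 (h.mono hsub))
  have h2 : ¬ sameComp E v e.2 := fun h =>
    hv (mem_cls.2 (sameComp_append_singleton_iff.2 (Or.inr (Or.inr ⟨h, sameComp_refl _ _⟩))))
  ext w
  simp only [mem_cls, sameComp_append_singleton_iff]
  constructor
  · rintro (h | ⟨_, g⟩ | ⟨_, g⟩)
    · exact h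
    · exact absurd g.symm h2
    · exact absurd g.symm h1
  · exact Or.inl

lemma notMem_cls_append_of_mem_cls (hv : v ∉ cls (E ++ [e]) e.1) (hw : w ∈ cls E v) :
    w ∉ cls (E ++ [e]) e.1 := fun hwC =>
  hv (mem_cls.2 (((mem_cls.1 hw).mono (List.subset_append_left _ _)).symm.trans (mem_cls.1 hwC)))

lemma sum_eq_sum_div_card_cls (E : List (Fin n × Fin n)) {T : Finset (Fin n)}
    (hT : ∀ v ∈ T, cls E v ⊆ T) (x : Fin n → ℝ) :
    ∑ v ∈ T, x v = ∑ v ∈ T, (∑ w ∈ cls E v, x w) / (cls E v).card := by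
  simp_rw [Finset.sum_div]
  rw [Finset.sum_comm' (t' := T) (s' := cls E) fun v w =>
    ⟨fun ⟨hv, hw⟩ => ⟨mem_cls.2 (mem_cls.1 hw).symm, hT v hv hw⟩,
      fun ⟨hv, hw⟩ => ⟨hT w hw hv, mem_cls.2 (mem_cls.1 hv).symm⟩⟩]
  refine Finset.sum_congr rfl fun w _ => ?_
  rw [Finset.sum_congr rfl fun v hv => by rw [cls_eq_of_mem hv], Finset.sum_const, nsmul_eq_mul,
    mul_div_cancel₀ _ (by exact_mod_cast (cls_nonempty E w).card_pos.ne')]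

lemma card_filter_eq_sum_div_card_cls (E : List (Fin n × Fin n)) {T : Finset (Fin n)}
    (hT : ∀ v ∈ T, cls E v ⊆ T) (p : Fin n → Prop) [DecidablePred p] :
    ((T.filter p).card : ℝ) = ∑ v ∈ T, (((cls E v).filter p).card : ℝ) / (cls E v).card := by
  simp only [Finset.natCast_card_filter]
  exact sum_eq_sum_div_card_cls E hT _

lemma sum_cls_div_card (E : List (Fin n × Fin n)) (x : Fin n) (g : Finset (Fin n) → ℝ) :
    ∑ v ∈ cls E x, g (cls E v) / (cls E v).card = g (cls E x) := by
  rw [Finset.sum_congr rfl fun v hv => by rw [cls_eq_of_mem hv], Finset.sum_const, nsmul_eq_mul,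
    mul_div_cancel₀ _ (by exact_mod_cast (cls_nonempty E x).card_pos.ne')]

end Classes

section Counting

lemma fin_two_add_one_ne_self : ∀ s : Fin 2, s + 1 ≠ s := by decide

lemma fin_two_eq_add_one_of_ne : ∀ {s t : Fin 2}, s ≠ t → t = s + 1 := by decide

lemma fin_two_add_one_add_one : ∀ s : Fin 2, s + 1 + 1 = s := by decide

lemma fin_two_ne_iff_eq_add_one : ∀ {s t : Fin 2}, t ≠ s ↔ t = s + 1 := by decide

lemma fin_two_ite_eq_ite_iff : ∀ a b c m : Fin 2,
    ((if a = c then m else m + 1) = (if b = c then m else m + 1)) ↔ a = b := by decide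

variable (a0 : Fin n → Fin 2)

def initCount (j : Fin 2) (S : Finset (Fin n)) : ℕ := (S.filter fun w => a0 w = j).card

def displaced (f : Fin n → Fin 2) (S : Finset (Fin n)) : ℕ := (S.filter fun w => a0 w ≠ f w).card

def minority (S : Finset (Fin n)) : ℕ := min (initCount a0 0 S) (initCount a0 1 S)

def majority (S : Finset (Fin n)) : Fin 2 := if initCount a0 1 S ≤ initCount a0 0 S then 0 else 1

variable {a0}

lemma initCount_union {S T : Finset (Fin n)} (h : Disjoint S T) (j : Fin 2) :
    initCount a0 j (S ∪ T) = initCount a0 j S + initCount a0 j T := by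
  rw [initCount, Finset.filter_union,
    Finset.card_union_of_disjoint (Finset.disjoint_filter_filter h)]
  rfl

lemma displaced_union {f : Fin n → Fin 2} {S T : Finset (Fin n)} (h : Disjoint S T) :
    displaced a0 f (S ∪ T) = displaced a0 f S + displaced a0 f T := by
  rw [displaced, Finset.filter_union,
    Finset.card_union_of_disjoint (Finset.disjoint_filter_filter h)]
  rfl

lemma card_eq_initCount_add (s : Fin 2) (S : Finset (Fin n)) :
    S.card = initCount a0 s S + initCount a0 (s + 1) S := by
  rw [initCount, initCount, ← Finset.card_filter_add_card_filter_not (fun w => a0 w = s)]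
  simp only [fin_two_ne_iff_eq_add_one]

lemma minority_eq_min (s : Fin 2) (S : Finset (Fin n)) :
    minority a0 S = min (initCount a0 s S) (initCount a0 (s + 1) S) := by
  fin_cases s
  · rfl
  · exact min_comm _ _

lemma minority_le_initCount (j : Fin 2) (S : Finset (Fin n)) :
    minority a0 S ≤ initCount a0 j S := by
  rw [minority_eq_min j]
  exact min_le_left _ _

lemma initCount_majority_add_one (S : Finset (Fin n)) :
    initCount a0 (majority a0 S + 1) S = minority a0 S := by
  unfold majority minority
  split_ifs <;> simp only [Fin.isValue, zero_add, show (1 : Fin 2) + 1 = 0 from rfl] <;> omega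

lemma displaced_eq_initCount {f : Fin n → Fin 2} {S : Finset (Fin n)} {s : Fin 2}
    (hf : ∀ w ∈ S, f w = s) : displaced a0 f S = initCount a0 (s + 1) S := by
  rw [displaced, initCount]
  congr 1
  exact Finset.filter_congr fun w hw => by rw [hf w hw, fin_two_ne_iff_eq_add_one]

lemma displaced_congr {f g : Fin n → Fin 2} {S : Finset (Fin n)} (h : ∀ w ∈ S, f w = g w) :
    displaced a0 f S = displaced a0 g S := by
  rw [displaced, displaced]
  congr 1
  exact Finset.filter_congr fun w hw => by rw [h w hw]

lemma initCount_filter_comm (a0 b0 : Fin n → Fin 2) (i j : Fin 2) :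
    initCount a0 i (univ.filter (b0 · = j)) = initCount b0 j (univ.filter (a0 · = i)) := by
  simp only [initCount, Finset.filter_filter, and_comm]

lemma card_filter_ne_eq_displaced_add (truth a0 F : Fin n → Fin 2) (t : Fin 2) :
    (univ.filter fun v => a0 v ≠ F v).card = displaced a0 F (univ.filter (truth · = t))
      + displaced a0 F (univ.filter (truth · = t + 1)) := by
  rw [card_eq_initCount_add (a0 := truth) t]
  simp only [initCount, displaced, Finset.filter_filter, and_comm]

end Counting

section Potential

noncomputable def logSize (c : ℕ) : ℝ := Real.logb 2 (2 * c)

lemma one_le_logSize {c : ℕ} (hc : 1 ≤ c) : 1 ≤ logSize c := by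
  rw [logSize, Real.le_logb_iff_rpow_le one_lt_two (by positivity)]
  norm_num
  exact_mod_cast hc

lemma logSize_mono {c c' : ℕ} (hc : 1 ≤ c) (h : c ≤ c') : logSize c ≤ logSize c' :=
  Real.logb_le_logb_of_le one_lt_two (by positivity) (by gcongr)

lemma sub_le_mul_logSize_sub {u c : ℕ} (hu : 1 ≤ u) (huc : u ≤ c) :
    (c - u : ℝ) ≤ c * (logSize c - logSize u) := by
  have hu' : (0 : ℝ) < u := by exact_mod_cast hu
  have hc' : (0 : ℝ) < c := hu'.trans_le (by exact_mod_cast huc)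
  have hratio : (1 : ℝ) ≤ c / u := by rw [one_le_div hu']; exact_mod_cast huc
  have hlogb : logSize c - logSize u = Real.log (c / u) / Real.log 2 := by
    rw [logSize, logSize, ← Real.logb_div (by positivity) (by positivity),
      mul_div_mul_left _ _ two_ne_zero, Real.logb]
  have hlog2 : Real.log 2 ≤ 1 := by
    linarith [Real.log_le_sub_one_of_pos (x := 2) two_pos]
  have hlog : 1 - u / c ≤ Real.log (c / u) := by
    simpa using Real.one_sub_inv_le_log_of_pos (div_pos hc' hu')
  have : Real.log (c / u) ≤ Real.log (c / u) / Real.log 2 :=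
    le_div_self (Real.log_nonneg hratio) (Real.log_pos one_lt_two) hlog2
  calc (c - u : ℝ) = c * (1 - u / c) := by field_simp
    _ ≤ c * (logSize c - logSize u) := by rw [hlogb]; gcongr; linarith

/-- The potential of a class of `c` vertices, `m` of which form its minority for the initial
assignment and `d` of which are away from their initial server. -/
noncomputable def potentialOf (m d c : ℕ) : ℝ := 30 * m * logSize c + 3 * (2 * (m : ℝ) - d)

lemma potentialOf_add_le {p q p' q' : ℕ} (hP : 1 ≤ p + q) (hQ : 1 ≤ p' + q') :
    potentialOf (min p q) q (p + q) + potentialOf (min p' q') q' (p' + q')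
      ≤ potentialOf (min (p + p') (q + q')) (q + q') (p + q + (p' + q')) := by
  have hLP := logSize_mono hP (Nat.le_add_right (p + q) (p' + q'))
  have hLQ := logSize_mono hQ (Nat.le_add_left (p' + q') (p + q))
  have hL1 := one_le_logSize (hP.trans (Nat.le_add_right (p + q) (p' + q')))
  have hμ : ((min p q : ℕ) : ℝ) + (min p' q' : ℕ) ≤ (min (p + p') (q + q') : ℕ) := by
    exact_mod_cast (show min p q + min p' q' ≤ min (p + p') (q + q') by omega)
  unfold potentialOf
  set μ : ℝ := ((min p q : ℕ) : ℝ)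
  set ν : ℝ := ((min p' q' : ℕ) : ℝ)
  set m : ℝ := ((min (p + p') (q + q') : ℕ) : ℝ)
  have hμ0 : 0 ≤ μ := Nat.cast_nonneg _
  have hν0 : 0 ≤ ν := Nat.cast_nonneg _
  push_cast
  nlinarith [mul_le_mul_of_nonneg_left hLP hμ0, mul_le_mul_of_nonneg_left hLQ hν0,
    mul_le_mul_of_nonneg_right hμ (zero_le_one.trans hL1)]

/-- When merging a class `P` (`p` of its vertices on their initial server, `q` not) with a class
`Q` on the other server (`r` of its vertices on their initial server, `w` not), `P` moves if
keeping it would leave at least two thirds of the union displaced, or if moving it leaves less than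
that and its score `2p + w` does not exceed the score `2r + q` of `Q`. -/
def ShouldMove (p q r w : ℕ) : Prop :=
  2 * (p + w) ≤ q + r ∨ (p + w < 2 * (q + r) ∧ 2 * p + w ≤ 2 * r + q)

lemma shouldMove_swap_of_not {p q r w : ℕ} (h : ¬ ShouldMove p q r w) : ShouldMove r w p q := by
  unfold ShouldMove at *
  omega

lemma potential_gain_bound_of_balanced {x μ ν m P Q : ℤ} (hμ : 0 ≤ μ) (hν : 0 ≤ ν) (hP : 0 ≤ P)
    (hQ : 0 ≤ Q) (hsum : μ + ν ≤ m) (hm : P + Q < 3 * m) (hxm : x ≤ 8 * m) (hxP : x ≤ 4 * P)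
    (hxQ : x ≤ 4 * Q) :
    x * (P + Q) ≤ 30 * μ * Q + 30 * ν * P + 36 * (m - μ - ν) * (P + Q) := by
  rcases le_total (6 * (μ + ν)) (P + Q) with hsmall | hlarge
  · nlinarith [mul_nonneg hμ hQ, mul_nonneg hν hP]
  · rcases le_total P Q with hc | hc
    · nlinarith [mul_le_mul_of_nonneg_left hc hμ, mul_nonneg (sub_nonneg.2 hsum) (add_nonneg hP hQ)]
    · nlinarith [mul_le_mul_of_nonneg_left hc hν, mul_nonneg (sub_nonneg.2 hsum) (add_nonneg hP hQ)]

/-- `add_potentialOf_le_of_shouldMove` with each gap `logSize c - logSize c'` replaced by its lower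
bound `(c - c') / c`, and denominators cleared. -/
lemma potential_gain_bound_of_shouldMove {p q r w : ℕ} (hP : q ≤ 2 * p)
    (hmove : ShouldMove p q r w) :
    ((4 * p - 2 * q) * (p + q + (r + w)) : ℤ) ≤
      30 * (min p q : ℕ) * (r + w) + 30 * (min r w : ℕ) * (p + q)
        + 36 * ((min (p + w) (q + r) : ℕ) - (min p q : ℕ) - (min r w : ℕ)) * (p + q + (r + w)) := by
  have hsum : ((min p q : ℕ) : ℤ) + (min r w : ℕ) ≤ (min (p + w) (q + r) : ℕ) := by omega
  by_cases hforced : 2 * (p + w) ≤ q + r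
  · have hm : ((min (p + w) (q + r) : ℕ) : ℤ) = p + w := by omega
    have hνw : ((min r w : ℕ) : ℤ) ≤ w := by omega
    set ν : ℤ := ((min r w : ℕ) : ℤ)
    have hν0 : 0 ≤ ν := Nat.cast_nonneg _
    have hc0 : (0 : ℤ) ≤ p + q + (r + w) := by positivity
    have hslack := mul_nonneg (sub_nonneg.2 hsum) hc0
    rcases le_total p q with hpq | hqp
    · have hμ : ((min p q : ℕ) : ℤ) = p := by omega
      rw [hμ] at hslack ⊢
      nlinarith [mul_nonneg hν0 (by positivity : (0:ℤ) ≤ p + q),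
        mul_nonneg (by omega : (0:ℤ) ≤ 2 * p - q) (by omega : (0:ℤ) ≤ r + w - (2 * p - q)),
        mul_nonneg (by omega : (0:ℤ) ≤ 2 * p - q) (by omega : (0:ℤ) ≤ q - p),
        mul_nonneg (Int.natCast_nonneg p) (Int.natCast_nonneg r),
        mul_nonneg (Int.natCast_nonneg p) (Int.natCast_nonneg w)]
    · have hμ : ((min p q : ℕ) : ℤ) = q := by omega
      rw [hμ] at hslack ⊢
      nlinarith [mul_nonneg hν0 (by positivity : (0:ℤ) ≤ p + q),
        mul_nonneg (by omega : (0:ℤ) ≤ p - q) hc0,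
        mul_nonneg (Int.natCast_nonneg q) (Int.natCast_nonneg r),
        mul_nonneg (Int.natCast_nonneg q) (Int.natCast_nonneg w),
        mul_nonneg (by omega : (0:ℤ) ≤ r + w - p) (Int.natCast_nonneg q)]
  · obtain ⟨hzone, hscore⟩ := hmove.resolve_left hforced
    exact potential_gain_bound_of_balanced (Nat.cast_nonneg _) (Nat.cast_nonneg _) (by positivity)
      (by positivity) hsum (by omega) (by omega) (by omega) (by omega)

/-- Moving `P` costs `p + q` and is paid for by the increase of the potential. -/
lemma add_potentialOf_le_of_shouldMove {p q r w : ℕ} (hP : q ≤ 2 * p) (hP1 : 1 ≤ p + q)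
    (hQ1 : 1 ≤ r + w) (hmove : ShouldMove p q r w) :
    (p + q : ℝ) + potentialOf (min p q) q (p + q) + potentialOf (min r w) w (r + w)
      ≤ potentialOf (min (p + w) (q + r)) (p + w) (p + q + (r + w)) := by
  have hcore : ((4 * p - 2 * q) * (p + q + (r + w)) : ℝ) ≤
      30 * (min p q : ℕ) * (r + w) + 30 * (min r w : ℕ) * (p + q)
        + 36 * ((min (p + w) (q + r) : ℕ) - (min p q : ℕ) - (min r w : ℕ)) * (p + q + (r + w)) := by
    exact_mod_cast potential_gain_bound_of_shouldMove hP hmove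
  have hgapP := sub_le_mul_logSize_sub hP1 (Nat.le_add_right (p + q) (r + w))
  have hgapQ := sub_le_mul_logSize_sub hQ1 (Nat.le_add_left (r + w) (p + q))
  have hL1 := one_le_logSize (hP1.trans (Nat.le_add_right (p + q) (r + w)))
  have hμ : ((min p q : ℕ) : ℝ) + (min r w : ℕ) ≤ (min (p + w) (q + r) : ℕ) := by
    exact_mod_cast (show min p q + min r w ≤ min (p + w) (q + r) by omega)
  have hc : (0 : ℝ) < p + q + (r + w) := by
    have : (1 : ℝ) ≤ p + q := by exact_mod_cast hP1
    positivity
  unfold potentialOf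
  set μ : ℝ := ((min p q : ℕ) : ℝ)
  set ν : ℝ := ((min r w : ℕ) : ℝ)
  set m : ℝ := ((min (p + w) (q + r) : ℕ) : ℝ)
  have hμ0 : 0 ≤ μ := Nat.cast_nonneg _
  have hν0 : 0 ≤ ν := Nat.cast_nonneg _
  push_cast at hgapP hgapQ hcore ⊢
  refine le_of_mul_le_mul_left ?_ hc
  nlinarith [mul_le_mul_of_nonneg_left hgapP hμ0, mul_le_mul_of_nonneg_left hgapQ hν0,
    mul_le_mul_of_nonneg_right (mul_le_mul_of_nonneg_right hμ (sub_nonneg.2 hL1)) hc.le]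

variable (a0 f : Fin n → Fin 2)

noncomputable def clsPotential (S : Finset (Fin n)) : ℝ :=
  potentialOf (minority a0 S) (displaced a0 f S) S.card

/-- Every class `C` of `E` contributes `clsPotential a0 f C`, shared equally by its vertices. -/
noncomputable def potential (E : List (Fin n × Fin n)) : ℝ :=
  ∑ v, clsPotential a0 f (cls E v) / (cls E v).card

variable {a0 f}

lemma clsPotential_eq {S : Finset (Fin n)} {s : Fin 2} (hf : ∀ w ∈ S, f w = s) :
    clsPotential a0 f S = potentialOf (min (initCount a0 s S) (initCount a0 (s + 1) S))
      (initCount a0 (s + 1) S) (initCount a0 s S + initCount a0 (s + 1) S) := by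
  rw [clsPotential, minority_eq_min s, displaced_eq_initCount hf, ← card_eq_initCount_add]

end Potential

section Algorithm

variable (a0 : Fin n → Fin 2)

def complete (E : List (Fin n × Fin n)) : Prop := ∀ v, (cls E v).card = n / 2

/-- The class of vertex `0` goes to its majority server, all other vertices to the other one; the
pivot does not depend on the requests, so that further requests leave this assignment unchanged. -/
noncomputable def finalAssignment (E : List (Fin n × Fin n)) (v : Fin n) : Fin 2 :=
  if sameComp E v ⟨0, v.pos⟩ then majority a0 (cls E ⟨0, v.pos⟩)
  else majority a0 (cls E ⟨0, v.pos⟩) + 1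

def moveClass (f : Fin n → Fin 2) (S : Finset (Fin n)) (s : Fin 2) : Fin n → Fin 2 :=
  fun v => if v ∈ S then s else f v

/-- `E` are the requests before `e`, so `cls E e.1` and `cls E e.2` are the classes to merge. -/
noncomputable def mergeStep (f : Fin n → Fin 2) (E : List (Fin n × Fin n)) (e : Fin n × Fin n) :
    Fin n → Fin 2 :=
  if f e.1 = f e.2 then f
  else if ShouldMove (initCount a0 (f e.1) (cls E e.1)) (initCount a0 (f e.2) (cls E e.1))
      (initCount a0 (f e.2) (cls E e.2)) (initCount a0 (f e.1) (cls E e.2))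
    then moveClass f (cls E e.1) (f e.2)
    else moveClass f (cls E e.2) (f e.1)

noncomputable def step (f : Fin n → Fin 2) (E : List (Fin n × Fin n)) (e : Fin n × Fin n) :
    Fin n → Fin 2 :=
  if complete (E ++ [e]) then finalAssignment a0 (E ++ [e]) else mergeStep a0 f E e

noncomputable def alg (E : List (Fin n × Fin n)) : Fin n → Fin 2 :=
  if h : E = [] then a0 else step a0 (alg E.dropLast) E.dropLast (E.getLast h)
termination_by E.length
decreasing_by rw [List.length_dropLast]; exact Nat.sub_one_lt (by simpa using h)

variable {a0}

@[simp] lemma alg_nil : alg a0 [] = a0 := by rw [alg, dif_pos rfl]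

lemma alg_append_singleton (E : List (Fin n × Fin n)) (e : Fin n × Fin n) :
    alg a0 (E ++ [e]) = step a0 (alg a0 E) E e := by
  rw [alg, dif_neg (by simp)]
  simp

end Algorithm

section Merge

variable {a0 f g : Fin n → Fin 2} {E E' : List (Fin n × Fin n)} {e : Fin n × Fin n} {u v w : Fin n}

structure WellPlaced (a0 : Fin n → Fin 2) (E : List (Fin n × Fin n)) (f : Fin n → Fin 2) :
    Prop where
  collocated : collocates E f
  three_mul_displaced_le : ∀ v, 3 * displaced a0 f (cls E v) ≤ 2 * (cls E v).card

lemma WellPlaced.eq_of_mem_cls (hf : WellPlaced a0 E f) (hw : w ∈ cls E v) : f w = f v :=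
  hf.collocated w v (mem_cls.1 hw)

lemma wellPlaced_nil (a0 : Fin n → Fin 2) : WellPlaced a0 [] a0 where
  collocated u v h := by rw [sameComp_nil_iff.1 h]
  three_mul_displaced_le v := by simp [cls_nil, displaced]

lemma potential_nil (a0 : Fin n → Fin 2) : potential a0 a0 [] = 0 := by
  refine Finset.sum_eq_zero fun v _ => ?_
  have hm : minority a0 {v} = 0 := by
    rw [minority_eq_min (a0 v), initCount, initCount, Finset.filter_singleton,
      Finset.filter_singleton, if_pos rfl, if_neg (fin_two_add_one_ne_self (a0 v)).symm]
    simp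
  simp [cls_nil, clsPotential, potentialOf, hm, displaced]

lemma cls_congr (h : sameComp E = sameComp E') : cls E = cls E' := by
  unfold cls
  rw [h]

lemma WellPlaced.congr (h : sameComp E = sameComp E') (hf : WellPlaced a0 E f) :
    WellPlaced a0 E' f where
  collocated := by unfold collocates; rw [← h]; exact hf.collocated
  three_mul_displaced_le := by rw [← cls_congr h]; exact hf.three_mul_displaced_le

lemma potential_congr (h : sameComp E = sameComp E') : potential a0 f E = potential a0 f E' := by
  unfold potential
  rw [cls_congr h]

lemma WellPlaced.append (hf : WellPlaced a0 E f)
    (hC : ∀ w ∈ cls (E ++ [e]) e.1, g w = g e.1) (hout : ∀ v ∉ cls (E ++ [e]) e.1, g v = f v)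
    (hdisp : 3 * displaced a0 g (cls (E ++ [e]) e.1) ≤ 2 * (cls (E ++ [e]) e.1).card) :
    WellPlaced a0 (E ++ [e]) g := by
  constructor
  · intro u v huv
    by_cases hu : u ∈ cls (E ++ [e]) e.1
    · rw [hC u hu, hC v (mem_cls.2 (huv.symm.trans (mem_cls.1 hu)))]
    · have hv : v ∈ cls E u := by rw [← cls_append_of_notMem hu]; exact mem_cls.2 huv.symm
      rw [hout u hu, hout v (notMem_cls_append_of_mem_cls hu hv), hf.eq_of_mem_cls hv]
  · intro v
    by_cases hv : v ∈ cls (E ++ [e]) e.1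
    · rw [cls_eq_of_mem hv]; exact hdisp
    · rw [cls_append_of_notMem hv,
        displaced_congr fun w hw => hout w (notMem_cls_append_of_mem_cls hv hw)]
      exact hf.three_mul_displaced_le v

lemma potential_append (hns : ¬ sameComp E e.1 e.2)
    (hout : ∀ v ∉ cls (E ++ [e]) e.1, g v = f v) :
    potential a0 g (E ++ [e]) = potential a0 f E - clsPotential a0 f (cls E e.1)
      - clsPotential a0 f (cls E e.2) + clsPotential a0 g (cls E e.1 ∪ cls E e.2) := by
  set C := cls (E ++ [e]) e.1
  have hterm : ∀ v ∉ C, clsPotential a0 g (cls (E ++ [e]) v) / (cls (E ++ [e]) v).card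
      = clsPotential a0 f (cls E v) / (cls E v).card := by
    intro v hv
    rw [cls_append_of_notMem hv, clsPotential, clsPotential,
      displaced_congr fun w hw => hout w (notMem_cls_append_of_mem_cls hv hw)]
  have hsplit : ∀ (F : List (Fin n × Fin n)) (h : Fin n → Fin 2),
      potential a0 h F = ∑ v ∈ C, clsPotential a0 h (cls F v) / (cls F v).card
        + ∑ v ∈ Cᶜ, clsPotential a0 h (cls F v) / (cls F v).card := fun F h =>
    (Finset.sum_add_sum_compl C _).symm
  have hC : C = cls E e.1 ∪ cls E e.2 := cls_append_fst
  rw [hsplit (E ++ [e]) g, hsplit E f, sum_cls_div_card, Finset.sum_congr rfl fun v hv =>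
    hterm v (Finset.mem_compl.1 hv), hC, Finset.sum_union (disjoint_cls hns), sum_cls_div_card,
    sum_cls_div_card, cls_append_fst]
  ring

end Merge

section MergeStep

variable {a0 f g : Fin n → Fin 2} {E : List (Fin n × Fin n)} {e : Fin n × Fin n}

lemma clsPotential_add_le {P Q : Finset (Fin n)} {s : Fin 2} (hP : ∀ w ∈ P, f w = s)
    (hQ : ∀ w ∈ Q, f w = s) (hPQ : Disjoint P Q) (hP1 : P.Nonempty) (hQ1 : Q.Nonempty) :
    clsPotential a0 f P + clsPotential a0 f Q ≤ clsPotential a0 f (P ∪ Q) := by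
  have hPQ' : ∀ w ∈ P ∪ Q, f w = s := fun w hw => (Finset.mem_union.1 hw).elim (hP w) (hQ w)
  rw [clsPotential_eq hP, clsPotential_eq hQ, clsPotential_eq hPQ', initCount_union hPQ,
    initCount_union hPQ]
  refine (potentialOf_add_le ?_ ?_).trans_eq (by congr 1; ring)
  · rw [← card_eq_initCount_add]; exact hP1.card_pos
  · rw [← card_eq_initCount_add]; exact hQ1.card_pos

def Amortized (a0 f : Fin n → Fin 2) (E : List (Fin n × Fin n)) (e : Fin n × Fin n)
    (g : Fin n → Fin 2) : Prop :=
  WellPlaced a0 (E ++ [e]) g ∧ (movesBetween f g : ℝ) + potential a0 f E ≤ potential a0 g (E ++ [e])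

lemma amortized_self_of_sameComp (hf : WellPlaced a0 E f) (he : sameComp E e.1 e.2) :
    Amortized a0 f E e f := by
  have h : sameComp E = sameComp (E ++ [e]) := by
    ext u v
    exact (sameComp_append_iff_of_sameComp he).symm
  refine ⟨hf.congr h, ?_⟩
  rw [movesBetween_self, potential_congr h]
  simp

lemma amortized_self_of_eq (hf : WellPlaced a0 E f) (hns : ¬ sameComp E e.1 e.2)
    (heq : f e.1 = f e.2) : Amortized a0 f E e f := by
  have hP : ∀ w ∈ cls E e.1, f w = f e.1 := fun w hw => hf.eq_of_mem_cls hw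
  have hQ : ∀ w ∈ cls E e.2, f w = f e.1 := fun w hw => heq ▸ hf.eq_of_mem_cls hw
  have hdisj := disjoint_cls hns
  refine ⟨hf.append ?_ (fun _ _ => rfl) ?_, ?_⟩
  · rw [cls_append_fst]
    exact fun w hw => (Finset.mem_union.1 hw).elim (hP w) (hQ w)
  · rw [cls_append_fst, displaced_union hdisj, Finset.card_union_of_disjoint hdisj]
    have h1 := hf.three_mul_displaced_le e.1
    have h2 := hf.three_mul_displaced_le e.2
    omega
  · rw [movesBetween_self, potential_append hns (fun _ _ => rfl)]
    have := clsPotential_add_le (a0 := a0) hP hQ hdisj (cls_nonempty E e.1) (cls_nonempty E e.2)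
    push_cast
    linarith

lemma movesBetween_moveClass {S : Finset (Fin n)} {s : Fin 2} (hS : ∀ w ∈ S, f w ≠ s) :
    movesBetween f (moveClass f S s) = S.card := by
  rw [movesBetween]
  congr 1
  ext v
  by_cases hv : v ∈ S <;> simp [moveClass, hv, hS v]

lemma card_add_clsPotential_add_le {P Q : Finset (Fin n)} {s : Fin 2} (hP : ∀ w ∈ P, f w = s)
    (hQ : ∀ w ∈ Q, f w = s + 1) (hg : ∀ w ∈ P ∪ Q, g w = s + 1) (hPQ : Disjoint P Q)
    (hP1 : P.Nonempty) (hQ1 : Q.Nonempty) (hdisp : 3 * displaced a0 f P ≤ 2 * P.card)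
    (hmove : ShouldMove (initCount a0 s P) (initCount a0 (s + 1) P) (initCount a0 (s + 1) Q)
      (initCount a0 s Q)) :
    (P.card : ℝ) + clsPotential a0 f P + clsPotential a0 f Q ≤ clsPotential a0 g (P ∪ Q) := by
  set p := initCount a0 s P
  set q := initCount a0 (s + 1) P
  set r := initCount a0 (s + 1) Q
  set w := initCount a0 s Q
  have hcardP : P.card = p + q := card_eq_initCount_add s P
  have hcardQ : Q.card = r + w := by rw [card_eq_initCount_add (s + 1) Q, fin_two_add_one_add_one]
  have hφP : clsPotential a0 f P = potentialOf (min p q) q (p + q) := clsPotential_eq hP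
  have hφQ : clsPotential a0 f Q = potentialOf (min r w) w (r + w) := by
    rw [clsPotential_eq hQ, fin_two_add_one_add_one]
  have hφC : clsPotential a0 g (P ∪ Q)
      = potentialOf (min (p + w) (q + r)) (p + w) (p + q + (r + w)) := by
    rw [clsPotential_eq hg, fin_two_add_one_add_one, initCount_union hPQ, initCount_union hPQ,
      min_comm]
    congr 1
    ring
  rw [displaced_eq_initCount hP, hcardP] at hdisp
  have key := add_potentialOf_le_of_shouldMove (by omega) (hcardP ▸ hP1.card_pos)
    (hcardQ ▸ hQ1.card_pos) hmove
  rw [hφP, hφQ, hφC, hcardP]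
  push_cast
  linarith

lemma amortized_moveClass (hf : WellPlaced a0 E f) (hns : ¬ sameComp E e.1 e.2)
    (hne : f e.1 ≠ f e.2)
    (hmove : ShouldMove (initCount a0 (f e.1) (cls E e.1)) (initCount a0 (f e.2) (cls E e.1))
      (initCount a0 (f e.2) (cls E e.2)) (initCount a0 (f e.1) (cls E e.2))) :
    Amortized a0 f E e (moveClass f (cls E e.1) (f e.2)) := by
  set P := cls E e.1
  set Q := cls E e.2
  set g := moveClass f P (f e.2)
  have hs : f e.2 = f e.1 + 1 := fin_two_eq_add_one_of_ne hne
  have hs' : f e.2 + 1 = f e.1 := by rw [hs, fin_two_add_one_add_one]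
  have hdisj : Disjoint P Q := disjoint_cls hns
  have hP : ∀ w ∈ P, f w = f e.1 := fun w hw => hf.eq_of_mem_cls hw
  have hQ : ∀ w ∈ Q, f w = f e.2 := fun w hw => hf.eq_of_mem_cls hw
  have hgC : ∀ w ∈ P ∪ Q, g w = f e.2 := by
    intro w hw
    by_cases hwP : w ∈ P
    · simp [g, moveClass, hwP]
    · simp [g, moveClass, hwP, hQ w ((Finset.mem_union.1 hw).resolve_left hwP)]
  have hgout : ∀ v ∉ cls (E ++ [e]) e.1, g v = f v := fun v hv => by
    rw [cls_append_fst, Finset.notMem_union] at hv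
    exact if_neg hv.1
  refine ⟨hf.append ?_ hgout ?_, ?_⟩
  · rw [cls_append_fst]
    exact fun x hx => (hgC x hx).trans (hgC e.1 (Finset.mem_union_left _ self_mem_cls)).symm
  · rw [cls_append_fst, displaced_eq_initCount hgC, hs', initCount_union hdisj,
      Finset.card_union_of_disjoint hdisj, card_eq_initCount_add (a0 := a0) (f e.1) P,
      card_eq_initCount_add (a0 := a0) (f e.2) Q, ← hs, hs']
    unfold ShouldMove at hmove
    omega
  · have hpot := card_add_clsPotential_add_le (a0 := a0) hP (hs ▸ hQ) (hs ▸ hgC) hdisj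
      (cls_nonempty E e.1) (cls_nonempty E e.2) (hf.three_mul_displaced_le e.1) (hs ▸ hmove)
    rw [movesBetween_moveClass fun x hx => (hP x hx).trans_ne hne, potential_append hns hgout]
    linarith

lemma amortized_mergeStep (hf : WellPlaced a0 E f) : Amortized a0 f E e (mergeStep a0 f E e) := by
  by_cases hsc : sameComp E e.1 e.2
  · rw [mergeStep, if_pos (hf.collocated _ _ hsc)]
    exact amortized_self_of_sameComp hf hsc
  by_cases heq : f e.1 = f e.2
  · rw [mergeStep, if_pos heq]
    exact amortized_self_of_eq hf hsc heq
  rw [mergeStep, if_neg heq]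
  split_ifs with hmove
  · exact amortized_moveClass hf hsc heq hmove
  · have h := amortized_moveClass (e := e.swap) hf (fun h => hsc h.symm) (Ne.symm heq)
      (shouldMove_swap_of_not hmove)
    rw [Amortized, ← potential_congr sameComp_append_swap]
    exact ⟨h.1.congr sameComp_append_swap, h.2⟩

end MergeStep

section GlobalBounds

variable {a0 f truth : Fin n → Fin 2} {E : List (Fin n × Fin n)} {D : ℕ}

lemma sum_minority_div_card_le_minority {T : Finset (Fin n)} (hT : ∀ v ∈ T, cls E v ⊆ T) :
    ∑ v ∈ T, (minority a0 (cls E v) : ℝ) / (cls E v).card ≤ minority a0 T := by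
  have h : ∀ i, ∑ v ∈ T, (minority a0 (cls E v) : ℝ) / (cls E v).card ≤ initCount a0 i T := by
    intro i
    rw [initCount, card_filter_eq_sum_div_card_cls E hT]
    gcongr with v
    exact_mod_cast minority_le_initCount i _
  rw [minority, Nat.cast_min]
  exact le_min (h 0) (h 1)

lemma sum_minority_div_card_le (htr : ∀ u v, sameComp E u v → truth u = truth v)
    (hD : ∀ j, minority a0 (univ.filter (truth · = j)) ≤ D) :
    ∑ v, (minority a0 (cls E v) : ℝ) / (cls E v).card ≤ 2 * D := by
  rw [← Finset.sum_fiberwise univ truth, Fin.sum_univ_two, two_mul]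
  have h : ∀ j, ∑ v ∈ univ.filter (truth · = j), (minority a0 (cls E v) : ℝ) / (cls E v).card
      ≤ D := fun j =>
    (sum_minority_div_card_le_minority fun v hv w hw => by
      simp only [Finset.mem_filter, Finset.mem_univ, true_and] at hv ⊢
      exact (htr w v (mem_cls.1 hw)).trans hv).trans (by exact_mod_cast hD j)
  exact add_le_add (h 0) (h 1)

lemma WellPlaced.displaced_le_two_mul_minority (hf : WellPlaced a0 E f) (v : Fin n) :
    displaced a0 f (cls E v) ≤ 2 * minority a0 (cls E v) := by
  have h := hf.three_mul_displaced_le v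
  rw [displaced_eq_initCount fun w hw => hf.eq_of_mem_cls hw] at h ⊢
  rw [card_eq_initCount_add (a0 := a0) (f v)] at h
  rw [minority_eq_min (f v)]
  omega

lemma WellPlaced.card_displaced_le (hf : WellPlaced a0 E f)
    (htr : ∀ u v, sameComp E u v → truth u = truth v)
    (hD : ∀ j, minority a0 (univ.filter (truth · = j)) ≤ D) :
    (univ.filter fun v => a0 v ≠ f v).card ≤ 4 * D := by
  have h : ((univ.filter fun v => a0 v ≠ f v).card : ℝ) ≤ 4 * D :=
    calc ((univ.filter fun v => a0 v ≠ f v).card : ℝ)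
        = ∑ v, (displaced a0 f (cls E v) : ℝ) / (cls E v).card :=
          card_filter_eq_sum_div_card_cls E (fun _ _ => Finset.subset_univ _) _
      _ ≤ ∑ v, 2 * ((minority a0 (cls E v) : ℝ) / (cls E v).card) := by
          gcongr with v
          rw [← mul_div_assoc]
          gcongr
          exact_mod_cast hf.displaced_le_two_mul_minority v
      _ ≤ 4 * D := by
          rw [← Finset.mul_sum]
          linarith [sum_minority_div_card_le htr hD]
  exact_mod_cast h

lemma WellPlaced.card_fiber_le (hf : WellPlaced a0 E f)
    (htr : ∀ u v, sameComp E u v → truth u = truth v)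
    (hD : ∀ j, minority a0 (univ.filter (truth · = j)) ≤ D) (j : Fin 2) :
    (univ.filter fun v => f v = j).card ≤ (univ.filter fun v => a0 v = j).card + 4 * D := by
  have hsub : univ.filter (fun v => f v = j)
      ⊆ univ.filter (fun v => a0 v = j) ∪ univ.filter (fun v => a0 v ≠ f v) := by
    intro v
    simp only [Finset.mem_filter, Finset.mem_univ, true_and, Finset.mem_union]
    intro hv
    by_cases h : a0 v = j
    · exact Or.inl h
    · exact Or.inr (hv ▸ h)
  calc _ ≤ _ := Finset.card_le_card hsub
    _ ≤ _ := Finset.card_union_le _ _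
    _ ≤ _ := by gcongr; exact hf.card_displaced_le htr hD

lemma logSize_le {c : ℕ} (hc : 1 ≤ c) (hcn : c ≤ n) : logSize c ≤ 1 + Real.logb 2 n := by
  have hn : (0 : ℝ) < n := by exact_mod_cast hc.trans hcn
  calc logSize c ≤ logSize n := logSize_mono hc hcn
    _ = 1 + Real.logb 2 n := by
      rw [logSize, Real.logb_mul two_ne_zero hn.ne', Real.logb_self_eq_one one_lt_two]

lemma one_le_one_add_logb (n : ℕ) : (1 : ℝ) ≤ 1 + Real.logb 2 n := by
  rcases Nat.eq_zero_or_pos n with h | h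
  · simp [h]
  · linarith [Real.logb_nonneg one_lt_two (by exact_mod_cast h : (1 : ℝ) ≤ n)]

lemma potential_le (htr : ∀ u v, sameComp E u v → truth u = truth v)
    (hD : ∀ j, minority a0 (univ.filter (truth · = j)) ≤ D) :
    potential a0 f E ≤ 72 * D * (1 + Real.logb 2 n) := by
  have hclass : ∀ v, clsPotential a0 f (cls E v)
      ≤ 36 * (1 + Real.logb 2 n) * minority a0 (cls E v) := by
    intro v
    have hc := (cls_nonempty E v).card_pos
    have hL := logSize_le hc (by simpa using Finset.card_le_univ (cls E v))
    have hm : (0 : ℝ) ≤ minority a0 (cls E v) := Nat.cast_nonneg _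
    have hd : (0 : ℝ) ≤ displaced a0 f (cls E v) := Nat.cast_nonneg _
    rw [clsPotential, potentialOf]
    nlinarith [mul_le_mul_of_nonneg_left hL hm,
      mul_le_mul_of_nonneg_left ((one_le_logSize hc).trans hL) hm]
  have hlog : 0 ≤ 1 + Real.logb 2 n := zero_le_one.trans (one_le_one_add_logb n)
  calc potential a0 f E
      ≤ ∑ v, 36 * (1 + Real.logb 2 n) * ((minority a0 (cls E v) : ℝ) / (cls E v).card) := by
        unfold potential
        gcongr with v
        rw [← mul_div_assoc]
        gcongr
        exact hclass v
    _ ≤ 36 * (1 + Real.logb 2 n) * (2 * D) := by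
        rw [← Finset.mul_sum]
        gcongr
        exact sum_minority_div_card_le htr hD
    _ = 72 * D * (1 + Real.logb 2 n) := by ring

end GlobalBounds

section FinalAssignment

variable {a0 f F truth : Fin n → Fin 2} {E : List (Fin n × Fin n)} {e : Fin n × Fin n}

lemma sameComp_iff_of_complete (htr : ∀ u v, sameComp E u v → truth u = truth v)
    (hts : ∀ j, (univ.filter (truth · = j)).card = n / 2) (hc : complete E) (u v : Fin n) :
    sameComp E u v ↔ truth u = truth v := by
  have hcls : cls E v = univ.filter (truth · = truth v) :=
    Finset.eq_of_subset_of_card_le (fun w hw => by simpa using htr w v (mem_cls.1 hw))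
      (by rw [hts, hc])
  refine ⟨htr u v, fun h => mem_cls.1 ?_⟩
  rw [hcls]
  simpa using h

lemma complete_of_sameComp_iff (hE : ∀ u v, sameComp E u v ↔ truth u = truth v)
    (hts : ∀ j, (univ.filter (truth · = j)).card = n / 2) : complete E := by
  intro v
  rw [← hts (truth v)]
  congr 1
  ext w
  simp [hE]

lemma finalAssignment_append (he : sameComp E e.1 e.2) :
    finalAssignment a0 (E ++ [e]) = finalAssignment a0 E := by
  ext v
  simp only [finalAssignment, cls_append_of_sameComp he, sameComp_append_iff_of_sameComp he]

lemma isPerfect_finalAssignment (hE : ∀ u v, sameComp E u v ↔ truth u = truth v) :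
    isPerfect truth (finalAssignment a0 E) := by
  intro u v
  simp only [finalAssignment, hE]
  exact fin_two_ite_eq_ite_iff _ _ _ _

lemma card_fiber_of_isPerfect (hF : isPerfect truth F) {k : ℕ}
    (hts : ∀ j, (univ.filter (truth · = j)).card = k) (j : Fin 2) :
    (univ.filter (F · = j)).card = k := by
  by_cases hj : ∃ u, F u = j
  · obtain ⟨u, rfl⟩ := hj
    rw [← hts (truth u)]
    congr 1
    ext v
    simpa using hF v u
  · push Not at hj
    rw [Finset.filter_false_of_mem fun v _ => hj v, Finset.card_empty]
    rcases isEmpty_or_nonempty (Fin n) with hn | ⟨⟨u⟩⟩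
    · rw [← hts 0, Finset.univ_eq_empty, Finset.filter_empty, Finset.card_empty]
    · rw [← hts (truth u + 1), eq_comm, Finset.card_eq_zero]
      refine Finset.filter_false_of_mem fun v _ hv => fin_two_add_one_ne_self (truth u) ?_
      rw [← hv, ← hF v u, fin_two_eq_add_one_of_ne (hj v).symm,
        fin_two_eq_add_one_of_ne (hj u).symm]

lemma WellPlaced.card_filter_ne_le (hf : WellPlaced a0 E f) (hF : collocates E F) (v : Fin n) :
    ((cls E v).filter fun w => f w ≠ F w).card
      ≤ 3 * ((cls E v).filter fun w => a0 w ≠ F w).card := by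
  have hfv : ∀ w ∈ cls E v, f w = f v := fun w hw => hf.eq_of_mem_cls hw
  have hFv : ∀ w ∈ cls E v, F w = F v := fun w hw => hF w v (mem_cls.1 hw)
  by_cases hv : f v = F v
  · rw [Finset.filter_false_of_mem fun w hw => by simp [hfv w hw, hFv w hw, hv]]
    simp
  · have hsub : (cls E v).filter (fun w => a0 w = f v) ⊆ (cls E v).filter fun w => a0 w ≠ F w :=
      fun w hw => by
        rw [Finset.mem_filter] at hw ⊢
        exact ⟨hw.1, by rw [hw.2, hFv w hw.1]; exact hv⟩
    have hhome := Finset.card_le_card hsub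
    have hdisp := hf.three_mul_displaced_le v
    rw [displaced_eq_initCount hfv] at hdisp
    have hcard := Finset.card_filter_le (cls E v) fun w => f w ≠ F w
    have htot := card_eq_initCount_add (a0 := a0) (f v) (cls E v)
    unfold initCount at *
    omega

lemma WellPlaced.movesBetween_le (hf : WellPlaced a0 E f) (hF : collocates E F) :
    movesBetween f F ≤ 3 * (univ.filter fun v => a0 v ≠ F v).card := by
  have h : (movesBetween f F : ℝ) ≤ 3 * (univ.filter fun v => a0 v ≠ F v).card := by
    rw [movesBetween, card_filter_eq_sum_div_card_cls E (fun _ _ => Finset.subset_univ _),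
      card_filter_eq_sum_div_card_cls E (fun _ _ => Finset.subset_univ _), Finset.mul_sum]
    gcongr with v
    rw [← mul_div_assoc]
    gcongr
    exact_mod_cast hf.card_filter_ne_le hF v
  exact_mod_cast h

end FinalAssignment

section Instance

variable (I : ReInstance n 2)

/-- The `Δ` of the statement: how far the initial assignment is from a perfect partitioning. -/
def imbalance : ℕ :=
  min ((univ.filter fun v => I.init v = 0 ∧ I.truth v = 0).card)
    ((univ.filter fun v => I.init v = 0 ∧ I.truth v = 1).card)

lemma initCount_truthClass_add_one (i j : Fin 2) :
    initCount I.init i (univ.filter (I.truth · = j + 1))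
      = initCount I.init (i + 1) (univ.filter (I.truth · = j)) := by
  have hV := card_eq_initCount_add (a0 := I.init) i (univ.filter (I.truth · = j))
  have hS := card_eq_initCount_add (a0 := I.truth) j (univ.filter (I.init · = i))
  rw [I.truth_size] at hV
  rw [I.init_size, ← initCount_filter_comm I.init I.truth i j,
    ← initCount_filter_comm I.init I.truth i (j + 1)] at hS
  omega

lemma minority_truthClass_le (j : Fin 2) :
    minority I.init (univ.filter (I.truth · = j)) ≤ imbalance I := by
  have e : ∀ j, (univ.filter fun v => I.init v = 0 ∧ I.truth v = j).card
      = initCount I.init 0 (univ.filter (I.truth · = j)) := fun j => by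
    simp only [initCount, Finset.filter_filter, and_comm]
  have h0 := initCount_truthClass_add_one I 0 0
  have h1 := initCount_truthClass_add_one I 1 0
  simp only [Fin.isValue, zero_add, show (1 : Fin 2) + 1 = 0 from rfl] at h0 h1
  rw [imbalance, e, e]
  fin_cases j <;> simp only [minority, Fin.zero_eta, Fin.mk_one] <;> omega

lemma card_displaced_finalAssignment_le {E : List (Fin n × Fin n)} {D : ℕ}
    (hE : ∀ u v, sameComp E u v ↔ I.truth u = I.truth v)
    (hD : ∀ j, minority I.init (univ.filter (I.truth · = j)) ≤ D) :
    (univ.filter fun v => I.init v ≠ finalAssignment I.init E v).card ≤ 2 * D := by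
  rcases isEmpty_or_nonempty (Fin n) with hn | ⟨⟨x⟩⟩
  · simp [Finset.univ_eq_empty]
  set x0 : Fin n := ⟨0, x.pos⟩
  set t := I.truth x0
  set M := majority I.init (univ.filter (I.truth · = t))
  have hcls : cls E x0 = univ.filter (I.truth · = t) := by
    ext v
    simp [hE, t]
  have hF : ∀ v, finalAssignment I.init E v = if I.truth v = t then M else M + 1 := fun v => by
    show (if sameComp E v x0 then majority I.init (cls E x0)
      else majority I.init (cls E x0) + 1) = _
    rw [hE, hcls]
    congr
  have hF0 : ∀ v ∈ univ.filter (I.truth · = t), finalAssignment I.init E v = M := fun v hv => by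
    rw [hF, if_pos (Finset.mem_filter.1 hv).2]
  have hF1 : ∀ v ∈ univ.filter (I.truth · = t + 1), finalAssignment I.init E v = M + 1 :=
    fun v hv => by
      rw [hF, if_neg fun h => fin_two_add_one_ne_self t ((Finset.mem_filter.1 hv).2.symm.trans h)]
  rw [card_filter_ne_eq_displaced_add I.truth, displaced_eq_initCount hF0,
    displaced_eq_initCount hF1, fin_two_add_one_add_one, initCount_truthClass_add_one,
    initCount_majority_add_one]
  have := hD t
  omega

end Instance

section Run

lemma state_alg (a0 : Fin n → Fin 2) (σ : List (Fin n × Fin n)) (t : ℕ) :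
    state alg a0 σ t = alg a0 (σ.take t) := by
  cases t <;> simp [state]

variable (I : ReInstance n 2)

noncomputable def run (t : ℕ) : Fin n → Fin 2 := alg I.init (I.sigma.take t)

noncomputable def movesUpTo (t : ℕ) : ℕ := ∑ s ∈ range t, movesBetween (run I s) (run I (s + 1))

variable {I} {t : ℕ}

lemma truth_eq_of_sameComp_take {u v : Fin n} (h : sameComp (I.sigma.take t) u v) :
    I.truth u = I.truth v :=
  (I.reveals u v).1 (h.mono (List.take_subset _ _))

lemma sameComp_take_iff_of_complete (hc : complete (I.sigma.take t)) (u v : Fin n) :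
    sameComp (I.sigma.take t) u v ↔ I.truth u = I.truth v :=
  sameComp_iff_of_complete (fun _ _ => truth_eq_of_sameComp_take) I.truth_size hc u v

lemma take_succ_eq (ht : t < I.sigma.length) :
    I.sigma.take (t + 1) = I.sigma.take t ++ [I.sigma[t]] :=
  (List.take_concat_get' _ _ ht).symm

lemma complete_take_succ (ht : t < I.sigma.length) (hc : complete (I.sigma.take t)) :
    complete (I.sigma.take (t + 1)) := by
  have he : sameComp (I.sigma.take t) I.sigma[t].1 I.sigma[t].2 :=
    (sameComp_take_iff_of_complete hc _ _).2 (I.edges_within _ (List.getElem_mem ht))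
  intro v
  rw [take_succ_eq ht, cls_append_of_sameComp he]
  exact hc v

lemma run_succ (ht : t < I.sigma.length) :
    run I (t + 1) = step I.init (run I t) (I.sigma.take t) I.sigma[t] := by
  rw [run, run, take_succ_eq ht, alg_append_singleton]

lemma movesUpTo_succ :
    movesUpTo I (t + 1) = movesUpTo I t + movesBetween (run I t) (run I (t + 1)) :=
  Finset.sum_range_succ _ _

lemma movesBetween_finalAssignment_le (hc : complete (I.sigma.take (t + 1)))
    (hf : WellPlaced I.init (I.sigma.take t) (run I t)) :
    movesBetween (run I t) (finalAssignment I.init (I.sigma.take (t + 1))) ≤ 6 * imbalance I := by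
  have hperf := isPerfect_finalAssignment (a0 := I.init) (sameComp_take_iff_of_complete hc)
  have hcol : collocates (I.sigma.take t) (finalAssignment I.init (I.sigma.take (t + 1))) :=
    fun u v huv => (hperf u v).2 (truth_eq_of_sameComp_take huv)
  have := card_displaced_finalAssignment_le I (sameComp_take_iff_of_complete hc)
    (minority_truthClass_le I)
  have := hf.movesBetween_le hcol
  omega

lemma potential_take_le (f : Fin n → Fin 2) :
    potential I.init f (I.sigma.take t) ≤ 72 * imbalance I * (1 + Real.logb 2 n) :=
  potential_le (fun _ _ => truth_eq_of_sameComp_take) (minority_truthClass_le I)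

variable (I) in
/-- The two phases of the algorithm: classes are merged while some class is incomplete, and from
then on the final assignment is kept, as the remaining requests do not change it. -/
def RunInvariant (t : ℕ) : Prop :=
  (complete (I.sigma.take t) ∧ t ≠ 0 →
    run I t = finalAssignment I.init (I.sigma.take t) ∧
      (movesUpTo I t : ℝ) ≤ 78 * imbalance I * (1 + Real.logb 2 n)) ∧
  (¬ (complete (I.sigma.take t) ∧ t ≠ 0) →
    WellPlaced I.init (I.sigma.take t) (run I t) ∧
      (movesUpTo I t : ℝ) ≤ potential I.init (run I t) (I.sigma.take t))

lemma runInvariant_zero : RunInvariant I 0 := by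
  refine ⟨fun h => absurd rfl h.2, fun _ => ?_⟩
  simp [run, movesUpTo, wellPlaced_nil, potential_nil]

lemma runInvariant_succ_of_complete (ht : t < I.sigma.length) (ih : RunInvariant I t)
    (hc : complete (I.sigma.take (t + 1))) : RunInvariant I (t + 1) := by
  have hrun : run I (t + 1) = finalAssignment I.init (I.sigma.take (t + 1)) := by
    rw [run_succ ht, step, ← take_succ_eq ht, if_pos hc]
  refine ⟨fun _ => ⟨hrun, ?_⟩, fun h => absurd ⟨hc, t.succ_ne_zero⟩ h⟩
  rw [movesUpTo_succ, Nat.cast_add]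
  by_cases hprev : complete (I.sigma.take t) ∧ t ≠ 0
  · obtain ⟨hrun', hmoves⟩ := ih.1 hprev
    have he : sameComp (I.sigma.take t) I.sigma[t].1 I.sigma[t].2 :=
      (sameComp_take_iff_of_complete hprev.1 _ _).2 (I.edges_within _ (List.getElem_mem ht))
    rw [hrun, take_succ_eq ht, finalAssignment_append he, ← hrun', movesBetween_self]
    simpa using hmoves
  · obtain ⟨hW, hmoves⟩ := ih.2 hprev
    have hjump : (movesBetween (run I t) (run I (t + 1)) : ℝ)
        ≤ 6 * imbalance I * (1 + Real.logb 2 n) := by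
      rw [hrun]
      calc _ ≤ (6 * imbalance I : ℝ) := by exact_mod_cast movesBetween_finalAssignment_le hc hW
        _ ≤ _ := le_mul_of_one_le_right (by positivity) (one_le_one_add_logb n)
    linarith [potential_take_le (I := I) (t := t) (run I t)]

lemma runInvariant_succ_of_not_complete (ht : t < I.sigma.length) (ih : RunInvariant I t)
    (hc : ¬ complete (I.sigma.take (t + 1))) : RunInvariant I (t + 1) := by
  obtain ⟨hW, hmoves⟩ := ih.2 fun h => hc (complete_take_succ ht h.1)
  have hrun : run I (t + 1) = mergeStep I.init (run I t) (I.sigma.take t) I.sigma[t] := by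
    rw [run_succ ht, step, ← take_succ_eq ht, if_neg hc]
  obtain ⟨hW', hpay⟩ := amortized_mergeStep (e := I.sigma[t]) hW
  rw [← hrun, ← take_succ_eq ht] at hW' hpay
  refine ⟨fun h => absurd h.1 hc, fun _ => ⟨hW', ?_⟩⟩
  rw [movesUpTo_succ, Nat.cast_add]
  linarith

lemma runInvariant (ht : t ≤ I.sigma.length) : RunInvariant I t := by
  induction t with
  | zero => exact runInvariant_zero
  | succ t ih =>
    by_cases hc : complete (I.sigma.take (t + 1))
    · exact runInvariant_succ_of_complete ht (ih (by omega)) hc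
    · exact runInvariant_succ_of_not_complete ht (ih (by omega)) hc

lemma movesUpTo_length_le :
    (movesUpTo I I.sigma.length : ℝ) ≤ 78 * imbalance I * (1 + Real.logb 2 n) := by
  obtain ⟨hfinal, hmerge⟩ := runInvariant (I := I) le_rfl
  by_cases h : complete (I.sigma.take I.sigma.length) ∧ I.sigma.length ≠ 0
  · exact (hfinal h).2
  · have : (0 : ℝ) ≤ imbalance I * (1 + Real.logb 2 n) := by
      have := one_le_one_add_logb n
      positivity
    linarith [(hmerge h).2, potential_take_le (I := I) (t := I.sigma.length) (run I I.sigma.length)]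

lemma run_succ_collocates (ht : t < I.sigma.length) :
    run I (t + 1) I.sigma[t].1 = run I (t + 1) I.sigma[t].2 := by
  obtain ⟨hfinal, hmerge⟩ := runInvariant (I := I) ht
  by_cases h : complete (I.sigma.take (t + 1)) ∧ t + 1 ≠ 0
  · rw [(hfinal h).1]
    exact (isPerfect_finalAssignment (sameComp_take_iff_of_complete h.1) _ _).2
      (I.edges_within _ (List.getElem_mem ht))
  · refine (hmerge h).1.collocated _ _ (sameComp_of_mem ?_)
    rw [take_succ_eq ht]
    exact List.mem_append_right _ (List.mem_singleton_self _)

lemma card_fiber_run_le (ht : t ≤ I.sigma.length) (j : Fin 2) :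
    (univ.filter (run I t · = j)).card ≤ n / 2 + 4 * imbalance I := by
  obtain ⟨hfinal, hmerge⟩ := runInvariant ht
  by_cases h : complete (I.sigma.take t) ∧ t ≠ 0
  · rw [(hfinal h).1, card_fiber_of_isPerfect (isPerfect_finalAssignment
      (sameComp_take_iff_of_complete h.1)) I.truth_size j]
    omega
  · rw [← I.init_size j]
    exact (hmerge h).1.card_fiber_le (fun _ _ => truth_eq_of_sameComp_take)
      (minority_truthClass_le I) j

end Run

section Guarantees

variable (I : ReInstance n 2)

lemma algMoves_alg_le :
    (algMoves alg I.init I.sigma : ℝ) ≤ 78 * imbalance I * (1 + Real.logb 2 n) := by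
  have h : algMoves alg I.init I.sigma = movesUpTo I I.sigma.length := by
    simp only [algMoves, movesUpTo, run, state_alg]
  rw [h]
  exact movesUpTo_length_le

lemma algComm_alg_le_algMoves : algComm alg I.init I.sigma ≤ algMoves alg I.init I.sigma :=
  algComm_le_algMoves fun _ ht => by simpa only [state_alg, run] using run_succ_collocates ht

lemma card_fiber_state_le (t : ℕ) (j : Fin 2) :
    (univ.filter (state alg I.init I.sigma t · = j)).card ≤ n / 2 + 4 * imbalance I := by
  rw [state_alg]
  rcases le_total t I.sigma.length with ht | ht
  · exact card_fiber_run_le ht j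
  · rw [List.take_of_length_le ht, ← List.take_length (l := I.sigma)]
    exact card_fiber_run_le le_rfl j

lemma isPerfect_state_length : isPerfect I.truth (state alg I.init I.sigma I.sigma.length) := by
  rw [state_alg]
  by_cases hσ : I.sigma = []
  · have hinj : Function.Injective I.truth := fun u v h => by
      have := (I.reveals u v).2 h
      rw [hσ] at this
      exact sameComp_nil_iff.1 this
    rw [hσ, List.take_nil, alg_nil]
    exact isPerfect_of_injective hinj fun j => by rw [I.init_size, I.truth_size]
  · have hc : complete (I.sigma.take I.sigma.length) := by
      rw [List.take_length]
      exact complete_of_sameComp_iff I.reveals I.truth_size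
    rw [← run, ((runInvariant le_rfl).1 ⟨hc, by simpa using hσ⟩).1]
    exact isPerfect_finalAssignment (sameComp_take_iff_of_complete hc)

end Guarantees

end MajorityVoting

open MajorityVoting

/-- **Majority Voting, two servers.** There is a universal constant `C`
such that for all `n` and `α > 1` with `2 ∣ n` there is a deterministic online algorithm
for two servers such that on every instance, with
`Δ = min{|V_init(S₀) ∩ V₀|, |V_init(S₀) ∩ V₁|}`:
(a) its total (moving plus communication) cost is at most `C·α·Δ·(1 + log₂ n)`;
(b) at every point the load of each server is at most `n/2 + 4Δ`; and
(c) its final assignment places each ground-truth component alone on one server. -/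
theorem stmt5 :
    ∃ C : ℝ, 0 < C ∧
      ∀ (n : ℕ) (α : ℝ), 1 < α → 2 ∣ n →
        ∃ A : OnlineAlg n 2, ∀ (I : ReInstance n 2) (Δ : ℕ),
          Δ = min ((Finset.univ.filter fun v => I.init v = 0 ∧ I.truth v = 0).card)
                  ((Finset.univ.filter fun v => I.init v = 0 ∧ I.truth v = 1).card) →
          algCost α A I.init I.sigma ≤ C * (α * Δ * (1 + Real.logb 2 n)) ∧
          (∀ (t : ℕ) (j : Fin 2),
            (Finset.univ.filter fun v => state A I.init I.sigma t v = j).card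
              ≤ n / 2 + 4 * Δ) ∧
          isPerfect I.truth (state A I.init I.sigma I.sigma.length) := by
  refine ⟨156, by norm_num, fun n α hα _ => ⟨alg, fun I Δ hΔ => ?_⟩⟩
  obtain rfl : Δ = imbalance I := hΔ
  refine ⟨?_, card_fiber_state_le I, isPerfect_state_length I⟩
  have hcomm : (algComm alg I.init I.sigma : ℝ) ≤ algMoves alg I.init I.sigma := by
    exact_mod_cast algComm_alg_le_algMoves I
  have hmoves : (0 : ℝ) ≤ algMoves alg I.init I.sigma := Nat.cast_nonneg _
  rw [algCost]
  calc _ ≤ 2 * α * algMoves alg I.init I.sigma := by nlinarith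
    _ ≤ 2 * α * (78 * imbalance I * (1 + Real.logb 2 n)) := by
      gcongr
      exact algMoves_alg_le I
    _ = 156 * (α * imbalance I * (1 + Real.logb 2 n)) := by ring
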